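/- In the graded ring R = ℤ[h, e]/(h⁴, h·e, −e³ + h³), the degree-3 component R₃ is a free abelian group of rank 1 generated by the class of h³, and the degree-1 component R₁ is free of rank 2 generated by h and e. -/

import Mathlib

open MvPolynomial

/-- The defining ideal of the presentation of the Chow ring of the blow-up of `ℙ³` at a
point; variables: `X 0 = h`, `X 1 = e`. -/
noncomputable def pointBlowupIdeal : Ideal (MvPolynomial (Fin 2) ℤ) :=
  Ideal.span {X 0 ^ 4, X 0 * X 1, -X 1 ^ 3 + X 0 ^ 3}

/-- The degree-`d` homogeneous component of `R = ℤ[h,e]/(h⁴, h·e, −e³ + h³)`, where `h` and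
`e` both have degree 1. -/
noncomputable def pointBlowupGrade (d : ℕ) :
    Submodule ℤ (MvPolynomial (Fin 2) ℤ ⧸ pointBlowupIdeal) :=
  Submodule.map (Ideal.Quotient.mkₐ ℤ pointBlowupIdeal).toLinearMap
    (homogeneousSubmodule (Fin 2) ℤ d)

/-!
Both `h` and `e` have degree one, so `R₃ = R₁ ^ 3` is spanned by the products of three of
them; modulo `h e = 0` and `e³ = h³` each such product is `0` or `h³`. For independence, the
ideal is generated in degrees `≥ 2`, so the linear coefficients of its elements vanish, and the
functional `f ↦ [h³] f + [e³] f`, which is `1` on `h³`, vanishes on every multiple of the three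
generators.
-/

namespace MvPolynomial

variable {σ R : Type*} [CommSemiring R]

theorem map_homogeneousSubmodule_one {A : Type*} [Semiring A] [Algebra R A]
    (f : MvPolynomial σ R →ₐ[R] A) :
    (homogeneousSubmodule σ R 1).map f.toLinearMap = Submodule.span R (Set.range (f ∘ X)) := by
  rw [homogeneousSubmodule_one_eq_span_X, Submodule.map_span, ← Set.range_comp]
  rfl

theorem map_homogeneousSubmodule {A : Type*} [Semiring A] [Algebra R A]
    (f : MvPolynomial σ R →ₐ[R] A) (n : ℕ) :
    (homogeneousSubmodule σ R n).map f.toLinearMap =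
      (homogeneousSubmodule σ R 1).map f.toLinearMap ^ n := by
  rw [← homogeneousSubmodule_one_pow, Submodule.map_pow]

end MvPolynomial

theorem AddMonoidHom.eq_zero_of_mem_idealSpan {A M : Type*} [CommSemiring A] [AddCommMonoid M]
    (ψ : A →+ M) {S : Set A} (hS : ∀ s ∈ S, ∀ g, ψ (g * s) = 0) {x : A}
    (hx : x ∈ Ideal.span S) : ψ x = 0 := by
  suffices ∀ g, ψ (g * x) = 0 by simpa using this 1
  induction hx using Submodule.span_induction with
  | mem s hs => exact hS s hs
  | zero => simp
  | add y z _ _ hy hz => simp [mul_add, hy, hz]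
  | smul a y _ hy => intro g; simpa [mul_assoc] using hy (g * a)

theorem Ideal.linearIndependent_quotient_mk_iff {R A ι : Type*} [CommRing R] [CommRing A]
    [Algebra R A] [Fintype ι] (I : Ideal A) (v : ι → A) :
    LinearIndependent R (Ideal.Quotient.mk I ∘ v) ↔
      ∀ c : ι → R, ∑ i, c i • v i ∈ I → ∀ i, c i = 0 := by
  have hmk (c : ι → R) :
      ∑ i, c i • Ideal.Quotient.mk I (v i) = Ideal.Quotient.mk I (∑ i, c i • v i) := by
    simp only [← Ideal.Quotient.mkₐ_eq_mk R, map_sum, map_smul]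
  simp only [Fintype.linearIndependent_iff, Function.comp_apply, hmk,
    Ideal.Quotient.eq_zero_iff_mem]

namespace PointBlowup

local notation "h" => (X 0 : MvPolynomial (Fin 2) ℤ)
local notation "e" => (X 1 : MvPolynomial (Fin 2) ℤ)
local notation "mk" => Ideal.Quotient.mk pointBlowupIdeal

theorem mk_h_mul_mk_e : mk h * mk e = 0 := by
  rw [← map_mul, Ideal.Quotient.eq_zero_iff_mem]
  exact Ideal.subset_span (by simp)

theorem mk_e_pow_three : mk e ^ 3 = mk h ^ 3 := by
  rw [← map_pow, ← map_pow, Ideal.Quotient.eq]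
  have : -e ^ 3 + h ^ 3 ∈ pointBlowupIdeal := Ideal.subset_span (by simp)
  convert neg_mem this using 1
  ring

theorem coeff_single_one_eq_zero_of_mem (i : Fin 2) {f : MvPolynomial (Fin 2) ℤ}
    (hf : f ∈ pointBlowupIdeal) : coeff (Finsupp.single i 1) f = 0 := by
  refine AddMonoidHom.eq_zero_of_mem_idealSpan (coeffAddMonoidHom _) ?_ hf
  rintro s (rfl | rfl | rfl) g <;> fin_cases i <;>
    simp [mul_add, X, monomial_pow, monomial_mul, coeff_mul_monomial', Finsupp.le_def,
      Finsupp.single_apply]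

theorem coeff_h_cube_add_coeff_e_cube_eq_zero_of_mem {f : MvPolynomial (Fin 2) ℤ}
    (hf : f ∈ pointBlowupIdeal) :
    coeff (Finsupp.single 0 3) f + coeff (Finsupp.single 1 3) f = 0 := by
  refine AddMonoidHom.eq_zero_of_mem_idealSpan (coeffAddMonoidHom _ + coeffAddMonoidHom _) ?_ hf
  rintro s (rfl | rfl | rfl) g <;>
    simp [mul_add, X, monomial_pow, monomial_mul, coeff_mul_monomial', Finsupp.le_def,
      Finsupp.single_apply]

theorem grade_one : pointBlowupGrade 1 = Submodule.span ℤ {mk h, mk e} := by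
  rw [pointBlowupGrade, map_homogeneousSubmodule_one]
  congr 1
  ext
  simp [Fin.exists_fin_two, eq_comm]

theorem mul_mul_eq_zero_or_eq {x y z : MvPolynomial (Fin 2) ℤ ⧸ pointBlowupIdeal}
    (hx : x ∈ ({mk h, mk e} : Set _)) (hy : y ∈ ({mk h, mk e} : Set _))
    (hz : z ∈ ({mk h, mk e} : Set _)) : x * y * z = 0 ∨ x * y * z = mk (h ^ 3) := by
  have := mk_h_mul_mk_e
  have := mk_e_pow_three
  simp only [Set.mem_insert_iff, Set.mem_singleton_iff] at hx hy hz
  grind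

open scoped Pointwise in
theorem grade_three : pointBlowupGrade 3 = Submodule.span ℤ {mk (h ^ 3)} := by
  rw [pointBlowupGrade, map_homogeneousSubmodule, ← pointBlowupGrade, grade_one,
    Submodule.span_pow, pow_three']
  refine le_antisymm (Submodule.span_le.2 ?_) ?_
  · rintro _ ⟨_, ⟨x, hx, y, hy, rfl⟩, z, hz, rfl⟩
    rcases mul_mul_eq_zero_or_eq hx hy hz with hw | hw <;>
      simp only [SetLike.mem_coe, hw, zero_mem, Submodule.mem_span_singleton_self]
  · have hh : mk h ∈ ({mk h, mk e} : Set _) := Set.mem_insert _ _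
    rw [Submodule.span_singleton_le_iff_mem, map_pow, pow_three']
    exact Submodule.subset_span (Set.mul_mem_mul (Set.mul_mem_mul hh hh) hh)

theorem linearIndependent_degree_three : LinearIndependent ℤ ![mk (h ^ 3)] := by
  rw [show ![mk (h ^ 3)] = mk ∘ ![h ^ 3] from FinVec.map_eq mk ![h ^ 3],
    Ideal.linearIndependent_quotient_mk_iff]
  intro c hc i
  fin_cases i
  simpa [-zsmul_eq_mul, coeff_smul, coeff_X_pow, Finsupp.single_eq_single_iff] using
    coeff_h_cube_add_coeff_e_cube_eq_zero_of_mem hc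

theorem linearIndependent_degree_one : LinearIndependent ℤ ![mk h, mk e] := by
  rw [show ![mk h, mk e] = mk ∘ ![h, e] from FinVec.map_eq mk ![h, e],
    Ideal.linearIndependent_quotient_mk_iff]
  intro c hc i
  have := coeff_single_one_eq_zero_of_mem i hc
  fin_cases i <;>
    simpa [-zsmul_eq_mul, coeff_smul, coeff_X, Finsupp.single_eq_single_iff] using this

end PointBlowup

open PointBlowup in
/-- In the graded ring `R = ℤ[h,e]/(h⁴, h·e, −e³ + h³)`, the degree-3 component `R₃` is a
free abelian group of rank 1 generated by the class of `h³`, and the degree-1 component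
`R₁` is free of rank 2 generated by `h` and `e`. -/
theorem point_blowup_graded_components :
    (pointBlowupGrade 3 =
        Submodule.span ℤ {Ideal.Quotient.mk pointBlowupIdeal (X 0 ^ 3)} ∧
      LinearIndependent ℤ ![Ideal.Quotient.mk pointBlowupIdeal (X 0 ^ 3)]) ∧
    (pointBlowupGrade 1 =
        Submodule.span ℤ {Ideal.Quotient.mk pointBlowupIdeal (X 0),
          Ideal.Quotient.mk pointBlowupIdeal (X 1)} ∧
      LinearIndependent ℤ ![Ideal.Quotient.mk pointBlowupIdeal (X 0),
          Ideal.Quotient.mk pointBlowupIdeal (X 1)]) :=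
  ⟨⟨grade_three, linearIndependent_degree_three⟩, grade_one, linearIndependent_degree_one⟩
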